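/- arXiv:1304.1584 — 4 statements merged into one kernel-verified Lean document; each statement's English description precedes it below -/
import Mathlib

section
/- The family H_conv(n,m,2) = { h_{a,b}(y) = (a • y) ⊕_m b : a ∈ {0,1}^{n+m-1}, b ∈ {0,1}^m }, where (a • y) is the wrapped convolution defined by c[i] = ⨁_{j=1}^n (y[j] ∧ a[i+j-1]) for i ∈ {1,…,m} and ⊕_m is componentwise xor, is pairwise independent: for any two distinct y, y' ∈ {0,1}^n and any α, α' ∈ {0,1}^m, the probability over uniformly random (a,b) that h_{a,b}(y) = α and h_{a,b}(y') = α' equals 2^{-2m}. -/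
open Finset

def wconv (n m : ℕ) (a : Fin (n + m - 1) → ZMod 2) (y : Fin n → ZMod 2) :
    Fin m → ZMod 2 :=
  fun i => ∑ j : Fin n, y j * a ⟨i.1 + j.1, by have hi := i.isLt; have hj := j.isLt; omega⟩

namespace HconvAux

lemma wconv_add_left (n m : ℕ) (a a' : Fin (n + m - 1) → ZMod 2) (z : Fin n → ZMod 2) :
    wconv n m (a + a') z = wconv n m a z + wconv n m a' z := by
  funext i
  simp [wconv, mul_add, Finset.sum_add_distrib]

lemma wconv_sub_left (n m : ℕ) (a a' : Fin (n + m - 1) → ZMod 2) (z : Fin n → ZMod 2) :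
    wconv n m (a - a') z = wconv n m a z - wconv n m a' z := by
  funext i
  simp [wconv, mul_sub, Finset.sum_sub_distrib]

lemma wconv_sub_right (n m : ℕ) (a : Fin (n + m - 1) → ZMod 2) (y y' : Fin n → ZMod 2) (i : Fin m) :
    wconv n m a (y' - y) i = wconv n m a y' i - wconv n m a y i := by
  simp [wconv, sub_mul, Finset.sum_sub_distrib]

lemma zmod2_ne_zero' : ∀ u : ZMod 2, u ≠ 0 → u = 1 := by decide

lemma zmod2_ne_zero {u : ZMod 2} (h : u ≠ 0) : u = 1 := zmod2_ne_zero' u h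

lemma wconv_surjective (n m : ℕ) (z : Fin n → ZMod 2) (hz : z ≠ 0) :
    Function.Surjective (fun a => wconv n m a z) := by
  -- find minimal j0 with z j0 ≠ 0
  have hne : (univ.filter (fun j => z j ≠ 0)).Nonempty := by
    by_contra h
    apply hz
    funext j
    rw [Finset.not_nonempty_iff_eq_empty, Finset.filter_eq_empty_iff] at h
    have := h (Finset.mem_univ j)
    simpa using this
  set j0 : Fin n := (univ.filter (fun j => z j ≠ 0)).min' hne with hj0def
  have hj0 : z j0 = 1 := by
    have := Finset.min'_mem _ hne
    rw [Finset.mem_filter] at this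
    exact zmod2_ne_zero this.2
  have hmin : ∀ j : Fin n, j.1 < j0.1 → z j = 0 := by
    intro j hj
    by_contra h
    have : j0 ≤ j := Finset.min'_le _ _ (by simp [h])
    omega
  -- extension map
  set ext : (Fin m → ZMod 2) → (Fin (n + m - 1) → ZMod 2) :=
    fun c k => if h : j0.1 ≤ k.1 ∧ k.1 - j0.1 < m then c ⟨k.1 - j0.1, h.2⟩ else 0 with hext
  set M : (Fin m → ZMod 2) → (Fin m → ZMod 2) := fun c => wconv n m (ext c) z with hM
  have ext_sub : ∀ c c', ext (c - c') = ext c - ext c' := by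
    intro c c'
    funext k
    simp only [hext, Pi.sub_apply]
    split <;> simp
  have M_sub : ∀ c c', M (c - c') = M c - M c' := by
    intro c c'
    simp only [hM, ext_sub, wconv_sub_left]
  -- key triangularity
  have key : ∀ (c : Fin m → ZMod 2) (i : Fin m),
      (∀ i' : Fin m, i.1 < i'.1 → c i' = 0) → M c i = c i := by
    intro c i hc
    have : ∀ j : Fin n, z j * ext c ⟨i.1 + j.1, by have := i.isLt; have := j.isLt; omega⟩
        = if j = j0 then c i else 0 := by
      intro j
      rcases lt_trichotomy j.1 j0.1 with h | h | h
      · rw [hmin j h, zero_mul, if_neg (by intro hh; subst hh; omega)]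
      · have hjj : j = j0 := Fin.ext h
        subst hjj
        rw [if_pos rfl, hj0, one_mul]
        simp only [hext]
        rw [dif_pos ⟨by omega, by omega⟩]
        congr 1
        apply Fin.ext
        simp
      · rw [if_neg (by intro hh; subst hh; omega)]
        simp only [hext]
        split
        · rename_i hcond
          rw [hc ⟨i.1 + j.1 - j0.1, hcond.2⟩ (by simp; omega)]
          simp
        · simp
    simp only [hM, wconv]
    rw [Finset.sum_congr rfl (fun j _ => this j)]
    simp
  -- M c = 0 → c = 0
  have Mker : ∀ c, M c = 0 → c = 0 := by
    intro c hc
    have main : ∀ k : ℕ, ∀ i : Fin m, m - i.1 ≤ k → c i = 0 := by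
      intro k
      induction k with
      | zero => intro i hi; exfalso; have := i.isLt; omega
      | succ k ih =>
        intro i hi
        have h1 : M c i = c i := key c i (fun i' hi' => ih i' (by omega))
        rw [hc] at h1
        simpa using h1.symm
    funext i
    exact main m i (by omega)
  have Minj : Function.Injective M := by
    intro c c' h
    have : M (c - c') = 0 := by rw [M_sub, h, sub_self]
    have := Mker _ this
    exact sub_eq_zero.mp this
  have Msurj : Function.Surjective M := Finite.injective_iff_surjective.mp Minj
  intro β
  obtain ⟨c, hc⟩ := Msurj β
  exact ⟨ext c, hc⟩

lemma card_fiber_eq (n m : ℕ) (z : Fin n → ZMod 2) (hz : z ≠ 0) (β : Fin m → ZMod 2) :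
    ((univ.filter (fun a : Fin (n + m - 1) → ZMod 2 => wconv n m a z = β)).card : ℕ)
      = (univ.filter (fun a : Fin (n + m - 1) → ZMod 2 => wconv n m a z = 0)).card := by
  obtain ⟨a₀, ha₀'⟩ := wconv_surjective n m z hz β
  have ha₀ : wconv n m a₀ z = β := ha₀'
  apply Finset.card_bij (fun a _ => a - a₀)
  · intro a ha
    simp only [Finset.mem_filter, Finset.mem_univ, true_and] at ha ⊢
    rw [wconv_sub_left, ha, ha₀, sub_self]
  · intro a ha b hb h
    simpa using congrArg (· + a₀) h
  · intro b hb
    simp only [Finset.mem_filter, Finset.mem_univ, true_and] at hb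
    refine ⟨b + a₀, ?_, by simp⟩
    simp only [Finset.mem_filter, Finset.mem_univ, true_and]
    rw [wconv_add_left, hb, ha₀, zero_add]

lemma card_fiber_mul (n m : ℕ) (z : Fin n → ZMod 2) (hz : z ≠ 0) (β : Fin m → ZMod 2) :
    (univ.filter (fun a : Fin (n + m - 1) → ZMod 2 => wconv n m a z = β)).card * 2 ^ m
      = 2 ^ (n + m - 1) := by
  have h1 : (Finset.univ : Finset (Fin (n + m - 1) → ZMod 2)).card
      = ∑ β' : Fin m → ZMod 2,
        (univ.filter (fun a : Fin (n + m - 1) → ZMod 2 => wconv n m a z = β')).card := by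
    exact Finset.card_eq_sum_card_fiberwise (fun a _ => Finset.mem_univ _)
  have h2 : ∀ β' : Fin m → ZMod 2,
      (univ.filter (fun a : Fin (n + m - 1) → ZMod 2 => wconv n m a z = β')).card
        = (univ.filter (fun a : Fin (n + m - 1) → ZMod 2 => wconv n m a z = β)).card := by
    intro β'
    rw [card_fiber_eq n m z hz β', card_fiber_eq n m z hz β]
  rw [Finset.sum_congr rfl (fun β' _ => h2 β')] at h1
  simp only [Finset.sum_const, Finset.card_univ, smul_eq_mul] at h1
  have hcard : Fintype.card (Fin (n + m - 1) → ZMod 2) = 2 ^ (n + m - 1) := by simp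
  have hcard2 : Fintype.card (Fin m → ZMod 2) = 2 ^ m := by simp
  rw [hcard, hcard2] at h1
  exact (mul_comm _ _).trans h1.symm

end HconvAux

/-- The family `H_conv(n,m,2) = { y ↦ (a • y) ⊕_m b }` is pairwise independent: for
distinct `y, y'` and any `α, α'`, the probability over uniform `(a,b)` that
`h_{a,b}(y) = α` and `h_{a,b}(y') = α'` equals `2^{-2m}`. -/
theorem hconv_pairwise_independent (n m : ℕ)
    (y y' : Fin n → ZMod 2) (hyy : y ≠ y')
    (α α' : Fin m → ZMod 2) :
    ((Finset.univ.filter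
        (fun p : (Fin (n + m - 1) → ZMod 2) × (Fin m → ZMod 2) =>
          (fun i => wconv n m p.1 y i + p.2 i) = α ∧
          (fun i => wconv n m p.1 y' i + p.2 i) = α')).card : ℝ)
      / (Fintype.card ((Fin (n + m - 1) → ZMod 2) × (Fin m → ZMod 2)) : ℝ)
      = ((2 : ℝ) ^ (2 * m))⁻¹ := by
  set z : Fin n → ZMod 2 := y' - y with hz
  have hzne : z ≠ 0 := sub_ne_zero.mpr (Ne.symm hyy)
  set β : Fin m → ZMod 2 := α' - α with hβ
  -- Step 1: card of pair filter = card of fiber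
  have step1 : (Finset.univ.filter
        (fun p : (Fin (n + m - 1) → ZMod 2) × (Fin m → ZMod 2) =>
          (fun i => wconv n m p.1 y i + p.2 i) = α ∧
          (fun i => wconv n m p.1 y' i + p.2 i) = α')).card
      = (univ.filter (fun a : Fin (n + m - 1) → ZMod 2 => wconv n m a z = β)).card := by
    apply Finset.card_bij (fun p _ => p.1)
    · intro p hp
      simp only [Finset.mem_filter, Finset.mem_univ, true_and] at hp ⊢
      funext i
      rw [hz, HconvAux.wconv_sub_right]
      have h1 := congrFun hp.1 i
      have h2 := congrFun hp.2 i
      rw [hβ]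
      simp only [Pi.sub_apply]
      rw [← h1, ← h2]
      ring
    · intro p hp q hq h
      simp only [Finset.mem_filter, Finset.mem_univ, true_and] at hp hq
      have hb : p.2 = q.2 := by
        funext i
        have h1 := congrFun hp.1 i
        have h2 := congrFun hq.1 i
        rw [h] at h1
        have := h1.trans h2.symm
        exact add_left_cancel this
      exact Prod.ext h hb
    · intro a ha
      simp only [Finset.mem_filter, Finset.mem_univ, true_and] at ha
      refine ⟨(a, fun i => α i - wconv n m a y i), ?_, rfl⟩
      simp only [Finset.mem_filter, Finset.mem_univ, true_and]
      constructor
      · funext i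
        show wconv n m a y i + (α i - wconv n m a y i) = α i
        ring
      · funext i
        have := congrFun ha i
        rw [hz, HconvAux.wconv_sub_right] at this
        simp only [hβ, Pi.sub_apply] at this
        show wconv n m a y' i + (α i - wconv n m a y i) = α' i
        linear_combination this
  -- counting
  have step2 := HconvAux.card_fiber_mul n m z hzne β
  rw [step1]
  have hprod : (Fintype.card ((Fin (n + m - 1) → ZMod 2) × (Fin m → ZMod 2)) : ℝ)
      = 2 ^ (n + m - 1) * 2 ^ m := by
    simp [Fintype.card_prod]
  rw [hprod]
  set K := (univ.filter (fun a : Fin (n + m - 1) → ZMod 2 => wconv n m a z = β)).card with hK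
  have hKpos : 0 < K := by
    rw [hK]
    apply Finset.card_pos.mpr
    obtain ⟨a, ha⟩ := HconvAux.wconv_surjective n m z hzne β
    exact ⟨a, by simp [ha]⟩
  have hKR : ((2 : ℝ) ^ (n + m - 1)) = (K : ℝ) * 2 ^ m := by
    have := congrArg (fun t : ℕ => (t : ℝ)) step2
    push_cast at this
    linarith
  rw [hKR]
  have hK0 : (K : ℝ) ≠ 0 := by positivity
  field_simp
  ring
end

section
/- Let H be a pairwise independent hash family from {0,1}^n to {0,1}^m, R ⊆ {0,1}^n with |R| = 2^m · n^{1/k} for integers n, k ≥ 1 with n > 2^k, let y ∈ R and α ∈ {0,1}^m. Then Pr_h[ |R ∩ h⁻¹(α)| ≤ 2n^{1/k} ∧ h(y) = α ] ≥ (1 − n^{-1/k}) / 2^{m+1}. -/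
open Finset


private lemma uniwit_final_algebra (ρ N P e : ℝ) (hρ2 : 2 < ρ) (hNpos : 0 < N)
    (hP1 : 1 ≤ P) (hE0 : 0 ≤ e)
    (he : e * (2*ρ-1) ≤ (P*ρ-1) * (N*(P^2)⁻¹)) :
    (1 - ρ⁻¹) * N ≤ (N * P⁻¹ - e) * (2 * P) := by
  have hPpos : (0:ℝ) < P := by linarith
  have hρpos : (0:ℝ) < ρ := by linarith
  have hiP : P⁻¹ * P = 1 := inv_mul_cancel₀ hPpos.ne'
  have hiρ : ρ⁻¹ * ρ = 1 := inv_mul_cancel₀ hρpos.ne'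
  have hiP2 : (P^2)⁻¹ * P^2 = 1 := inv_mul_cancel₀ (by positivity)
  have hd : (0:ℝ) < (2*ρ-1)*P*ρ := mul_pos (mul_pos (by linarith) hPpos) hρpos
  have keymul : 2*P*e * ((2*ρ-1)*P*ρ) ≤ N*(1+ρ⁻¹) * ((2*ρ-1)*P*ρ) := by
    have step2 : (e*(2*ρ-1)) * (2*P^2*ρ) ≤ ((P*ρ-1)*(N*(P^2)⁻¹)) * (2*P^2*ρ) :=
      mul_le_mul_of_nonneg_right he (by positivity)
    have step4 : (P*ρ-1)*N*2*ρ ≤ N*(1+ρ⁻¹) * ((2*ρ-1)*P*ρ) := by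
      have hexp : N*(1+ρ⁻¹) * ((2*ρ-1)*P*ρ) = N*((2*ρ-1)*P*ρ) + (ρ⁻¹*ρ)*(N*(2*ρ-1)*P) := by
        ring
      rw [hexp, hiρ]
      nlinarith [mul_nonneg (mul_nonneg hNpos.le hPpos.le) (by linarith : (0:ℝ) ≤ ρ - 1), mul_pos hNpos hρpos]
    calc 2*P*e * ((2*ρ-1)*P*ρ) = (e*(2*ρ-1)) * (2*P^2*ρ) := by ring
      _ ≤ ((P*ρ-1)*(N*(P^2)⁻¹)) * (2*P^2*ρ) := step2
      _ = (P*ρ-1)*N*2*ρ * ((P^2)⁻¹*P^2) := by ring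
      _ = (P*ρ-1)*N*2*ρ := by rw [hiP2, mul_one]
      _ ≤ _ := step4
  have key2 : 2*P*e ≤ N*(1+ρ⁻¹) := le_of_mul_le_mul_right keymul hd
  have hexp2 : (N * P⁻¹ - e) * (2 * P) = 2*(P⁻¹*P)*N - 2*P*e := by ring
  rw [hexp2, hiP]
  nlinarith [key2]

open scoped Classical in
/-- For a pairwise independent hash family from `{0,1}^n` to `{0,1}^m`,
`R ⊆ {0,1}^n` with `|R| = 2^m · n^{1/k}`, `n > 2^k`, `k ≥ 1`, `y ∈ R` and
`α ∈ {0,1}^m`, we have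
`Pr_h[ |R ∩ h⁻¹(α)| ≤ 2n^{1/k} ∧ h(y) = α ] ≥ (1 - n^{-1/k}) / 2^{m+1}`. -/
theorem uniwit_cell_prob (n m k : ℕ) (hk : 1 ≤ k) (hn : 2 ^ k < n)
    (H : Type) [Fintype H] [Nonempty H]
    (f : H → (Fin n → Bool) → (Fin m → Bool))
    (hpair : ∀ z z' : Fin n → Bool, z ≠ z' → ∀ β β' : Fin m → Bool,
      ((Finset.univ.filter (fun h : H => f h z = β ∧ f h z' = β')).card : ℝ)
        / (Fintype.card H : ℝ) = ((2 : ℝ) ^ (2 * m))⁻¹)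
    (hone : ∀ (z : Fin n → Bool) (β : Fin m → Bool),
      ((Finset.univ.filter (fun h : H => f h z = β)).card : ℝ)
        / (Fintype.card H : ℝ) = ((2 : ℝ) ^ m)⁻¹)
    (R : Finset (Fin n → Bool))
    (hR : (R.card : ℝ) = 2 ^ m * (n : ℝ) ^ ((1 : ℝ) / k))
    (y : Fin n → Bool) (hy : y ∈ R) (α : Fin m → Bool) :
    (1 - (n : ℝ) ^ (-(1 : ℝ) / k)) / 2 ^ (m + 1) ≤
      ((Finset.univ.filter (fun h : H =>
          ((R.filter (fun z => f h z = α)).card : ℝ) ≤ 2 * (n : ℝ) ^ ((1 : ℝ) / k)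
            ∧ f h y = α)).card : ℝ) / (Fintype.card H : ℝ) := by
  set ρ : ℝ := (n : ℝ) ^ ((1 : ℝ) / k) with hρdef
  have hk0 : (k : ℝ) ≠ 0 := by positivity
  have hn0 : (0:ℝ) < n := by
    have : 0 < n := lt_trans (by positivity : 0 < 2 ^ k) hn
    exact_mod_cast this
  have hρ2 : 2 < ρ := by
    have h1 : ((2:ℝ) ^ k : ℝ) < (n : ℝ) := by exact_mod_cast hn
    have h2 : ((2:ℝ) ^ k) ^ ((1:ℝ)/k) < ρ :=
      Real.rpow_lt_rpow (by positivity) h1 (by positivity)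
    calc (2:ℝ) = ((2:ℝ) ^ k) ^ ((1:ℝ)/k) := by
          rw [← Real.rpow_natCast 2 k, ← Real.rpow_mul (by norm_num)]
          rw [mul_one_div, div_self hk0, Real.rpow_one]
      _ < ρ := h2
  have hNpos : (0:ℝ) < (Fintype.card H : ℝ) := by
    exact_mod_cast Fintype.card_pos
  set N : ℝ := (Fintype.card H : ℝ)
  set P : ℝ := (2:ℝ) ^ m with hPdef
  have hP1 : (1:ℝ) ≤ P := one_le_pow₀ (by norm_num)
  have hPpos : (0:ℝ) < P := by positivity
  have hρpos : (0:ℝ) < ρ := by linarith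
  -- the events
  set A : Finset H := univ.filter (fun h : H => f h y = α) with hAdef
  set B : Finset H := univ.filter (fun h : H =>
      ((R.filter (fun z => f h z = α)).card : ℝ) ≤ 2 * ρ ∧ f h y = α) with hBdef
  have hBA : B ⊆ A := by
    intro h hh
    rw [hBdef, Finset.mem_filter] at hh
    rw [hAdef, Finset.mem_filter]
    exact ⟨hh.1, hh.2.2⟩
  set E : Finset H := A \ B with hEdef
  have hEcard : (E.card : ℝ) = (A.card : ℝ) - (B.card : ℝ) := by
    rw [hEdef, Finset.card_sdiff_of_subset hBA]
    exact_mod_cast Nat.cast_sub (Finset.card_le_card hBA)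
  have hA : (A.card : ℝ) / N = P⁻¹ := hone y α
  have hRpos : 0 < R.card := Finset.card_pos.mpr ⟨y, hy⟩
  have hRcard : ((R.erase y).card : ℝ) = (R.card : ℝ) - 1 := by
    rw [Finset.card_erase_of_mem hy]
    exact_mod_cast Nat.cast_sub hRpos
  have key : (E.card : ℝ) * (2 * ρ - 1) ≤ ((R.card : ℝ) - 1) * (N * (P^2)⁻¹) := by
    have hstep1 : (E.card : ℝ) * (2 * ρ - 1) ≤
        ∑ h ∈ E, (((R.erase y).filter (fun z => f h z = α ∧ f h y = α)).card : ℝ) := by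
      have := Finset.card_nsmul_le_sum E
        (fun h => (((R.erase y).filter (fun z => f h z = α ∧ f h y = α)).card : ℝ))
        (2 * ρ - 1) ?_
      · simpa [nsmul_eq_mul] using this
      · intro h hh
        rw [hEdef, Finset.mem_sdiff, hAdef, hBdef, Finset.mem_filter, Finset.mem_filter] at hh
        obtain ⟨⟨-, hfy⟩, hnb⟩ := hh
        have hcell : 2 * ρ < ((R.filter (fun z => f h z = α)).card : ℝ) := by
          by_contra hc
          exact hnb ⟨Finset.mem_univ h, le_of_not_gt hc, hfy⟩
        have heq : ((R.erase y).filter (fun z => f h z = α ∧ f h y = α))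
            = (R.filter (fun z => f h z = α)).erase y := by
          rw [← Finset.filter_erase]
          apply Finset.filter_congr
          intro z _
          simp [hfy]
        have hycell : y ∈ R.filter (fun z => f h z = α) :=
          Finset.mem_filter.mpr ⟨hy, hfy⟩
        have hcc : (((R.erase y).filter (fun z => f h z = α ∧ f h y = α)).card : ℝ)
            = ((R.filter (fun z => f h z = α)).card : ℝ) - 1 := by
          rw [heq, Finset.card_erase_of_mem hycell]
          have : 0 < (R.filter (fun z => f h z = α)).card := Finset.card_pos.mpr ⟨y, hycell⟩
          exact_mod_cast Nat.cast_sub this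
        rw [hcc]; linarith
    have hstep2 : ∑ h ∈ E, (((R.erase y).filter (fun z => f h z = α ∧ f h y = α)).card : ℝ)
        ≤ ∑ h : H, (((R.erase y).filter (fun z => f h z = α ∧ f h y = α)).card : ℝ) := by
      apply Finset.sum_le_sum_of_subset_of_nonneg (Finset.subset_univ E)
      intro i _ _; positivity
    have hswap : ∑ h : H, (((R.erase y).filter (fun z => f h z = α ∧ f h y = α)).card : ℝ)
        = ∑ z ∈ R.erase y, ((univ.filter (fun h : H => f h z = α ∧ f h y = α)).card : ℝ) := by
      simp only [Finset.card_filter]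
      push_cast
      rw [Finset.sum_comm]
    have hterm : ∀ z ∈ R.erase y,
        ((univ.filter (fun h : H => f h z = α ∧ f h y = α)).card : ℝ) = N * (P^2)⁻¹ := by
      intro z hz
      have hzy : z ≠ y := Finset.ne_of_mem_erase hz
      have := hpair z y hzy α α
      have h2m : ((2:ℝ) ^ (2 * m)) = P ^ 2 := by
        rw [hPdef, ← pow_mul, mul_comm]
      rw [h2m] at this
      field_simp at this ⊢
      linarith [this]
    have hsum : ∑ z ∈ R.erase y, ((univ.filter (fun h : H => f h z = α ∧ f h y = α)).card : ℝ)
        = ((R.card : ℝ) - 1) * (N * (P^2)⁻¹) := by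
      rw [Finset.sum_congr rfl hterm, Finset.sum_const, nsmul_eq_mul, hRcard]
    calc (E.card : ℝ) * (2 * ρ - 1) ≤ _ := hstep1
      _ ≤ _ := hstep2
      _ = _ := by rw [hswap, hsum]
  -- assemble
  have hAcard : (A.card : ℝ) = N * P⁻¹ := by
    have := (div_eq_iff hNpos.ne').mp hA
    linarith
  have hinv : (n:ℝ) ^ (-(1:ℝ)/k) = ρ⁻¹ := by
    rw [neg_div, Real.rpow_neg hn0.le]
  have hgoal : (1 - (n : ℝ) ^ (-(1 : ℝ) / k)) / 2 ^ (m + 1) = (1 - ρ⁻¹) / (2 * P) := by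
    rw [hinv, hPdef, pow_succ]
    ring
  have hBcard : ((Finset.univ.filter (fun h : H =>
          ((R.filter (fun z => f h z = α)).card : ℝ) ≤ 2 * (n : ℝ) ^ ((1 : ℝ) / k)
            ∧ f h y = α)).card : ℝ) = (B.card : ℝ) := by rw [hBdef]
  rw [hgoal, hBcard]
  have hB : (B.card : ℝ) = (A.card : ℝ) - (E.card : ℝ) := by linarith
  rw [hB, hAcard]
  rw [div_le_div_iff₀ (by positivity) hNpos]
  -- goal : (1 - ρ⁻¹) * N ≤ (N * P⁻¹ - E.card) * (2 * P)
  have hE0 : (0:ℝ) ≤ (E.card:ℝ) := Nat.cast_nonneg _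
  have he : (E.card:ℝ) * (2*ρ-1) ≤ (P*ρ-1) * (N*(P^2)⁻¹) := by
    rw [hR] at key; exact key
  exact uniwit_final_algebra ρ N P (E.card:ℝ) hρ2 hNpos hP1 hE0 he
end

section
/- Let H be a pairwise independent hash family from {0,1}^n to {0,1}^m, R ⊆ {0,1}^n with 2^{-m}|R| + 1 ≤ n^{1/k} + 1 (where n^{1/k} ≥ 1), y ∈ R, α ∈ {0,1}^m. Then Pr_h[ |R ∩ h⁻¹(α)| ≤ 2n^{1/k} | h(y) = α ] ≥ (1 − n^{-1/k})/2. -/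
open Finset

open scoped Classical in
/-- For a pairwise independent hash family from `{0,1}^n` to `{0,1}^m`, `R ⊆ {0,1}^n`
with `2^{-m}|R| + 1 ≤ n^{1/k} + 1` (where `n^{1/k} ≥ 1`), `y ∈ R`, `α ∈ {0,1}^m`:
`Pr_h[ |R ∩ h⁻¹(α)| ≤ 2n^{1/k} | h(y) = α ] ≥ (1 - n^{-1/k})/2`. -/
theorem cond_cell_prob (n m k : ℕ) (hk : 1 ≤ k)
    (H : Type) [Fintype H] [Nonempty H]
    (f : H → (Fin n → Bool) → (Fin m → Bool))
    (hpair : ∀ z z' : Fin n → Bool, z ≠ z' → ∀ β β' : Fin m → Bool,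
      ((Finset.univ.filter (fun h : H => f h z = β ∧ f h z' = β')).card : ℝ)
        / (Fintype.card H : ℝ) = ((2 : ℝ) ^ (2 * m))⁻¹)
    (hone : ∀ (z : Fin n → Bool) (β : Fin m → Bool),
      ((Finset.univ.filter (fun h : H => f h z = β)).card : ℝ)
        / (Fintype.card H : ℝ) = ((2 : ℝ) ^ m)⁻¹)
    (R : Finset (Fin n → Bool))
    (hbound : ((2 : ℝ) ^ m)⁻¹ * (R.card : ℝ) + 1 ≤ (n : ℝ) ^ ((1 : ℝ) / k) + 1)
    (hn1 : 1 ≤ (n : ℝ) ^ ((1 : ℝ) / k))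
    (y : Fin n → Bool) (hy : y ∈ R) (α : Fin m → Bool) :
    (1 - (n : ℝ) ^ (-(1 : ℝ) / k)) / 2 ≤
      ((Finset.univ.filter (fun h : H =>
          ((R.filter (fun z => f h z = α)).card : ℝ) ≤ 2 * (n : ℝ) ^ ((1 : ℝ) / k)
            ∧ f h y = α)).card : ℝ)
        / ((Finset.univ.filter (fun h : H => f h y = α)).card : ℝ) := by

  classical
  set t : ℝ := (n : ℝ) ^ ((1 : ℝ) / k) with ht
  have ht0 : (0 : ℝ) < t := lt_of_lt_of_le one_pos hn1
  have hneg : (n : ℝ) ^ (-(1 : ℝ) / k) = t⁻¹ := by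
    rw [neg_div, Real.rpow_neg (Nat.cast_nonneg n)]
  have hcardH : (0 : ℝ) < (Fintype.card H : ℝ) := by
    exact_mod_cast Fintype.card_pos
  set A : Finset H := Finset.univ.filter (fun h : H => f h y = α) with hA
  have h2m : (0 : ℝ) < ((2:ℝ)^m)⁻¹ := by positivity
  have hAcard : (A.card : ℝ) = (Fintype.card H : ℝ) * ((2:ℝ)^m)⁻¹ := by
    have h1 := hone y α
    rw [div_eq_iff hcardH.ne'] at h1
    rw [hA, h1]; ring
  have hApos : (0:ℝ) < (A.card : ℝ) := by rw [hAcard]; positivity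
  -- sum bound
  have hswap : ∑ h ∈ A, ((R.filter (fun z => f h z = α)).card : ℝ)
      = ∑ z ∈ R, ((A.filter (fun h => f h z = α)).card : ℝ) := by
    have e1 : ∀ h : H, ((R.filter (fun z => f h z = α)).card : ℝ)
        = ∑ z ∈ R, (if f h z = α then (1:ℝ) else 0) := by
      intro h; rw [Finset.card_filter]; push_cast; rfl
    have e2 : ∀ z, ((A.filter (fun h => f h z = α)).card : ℝ)
        = ∑ h ∈ A, (if f h z = α then (1:ℝ) else 0) := by
      intro z; rw [Finset.card_filter]; push_cast; rfl
    simp only [e1, e2]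
    exact Finset.sum_comm
  have hcounty : (A.filter (fun h => f h y = α)) = A := by
    apply Finset.filter_true_of_mem
    intro h hh
    rw [hA, Finset.mem_filter] at hh
    exact hh.2
  have hcountz : ∀ z ∈ R, z ≠ y →
      ((A.filter (fun h => f h z = α)).card : ℝ) = (A.card : ℝ) * ((2:ℝ)^m)⁻¹ := by
    intro z hz hzy
    have h2 := hpair y z (Ne.symm hzy) α α
    have hset : A.filter (fun h => f h z = α)
        = Finset.univ.filter (fun h : H => f h y = α ∧ f h z = α) := by
      rw [hA, Finset.filter_filter]
    rw [div_eq_iff hcardH.ne'] at h2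
    rw [hset, h2, hAcard]
    have h2m2 : (2:ℝ)^(2*m) = (2:ℝ)^m * (2:ℝ)^m := by rw [two_mul, pow_add]
    rw [h2m2, mul_inv]; ring
  have hR1 : 1 ≤ R.card := Finset.card_pos.2 ⟨y, hy⟩
  have hsum : ∑ h ∈ A, ((R.filter (fun z => f h z = α)).card : ℝ)
      ≤ (A.card : ℝ) * (1 + t) := by
    rw [hswap, ← Finset.add_sum_erase _ _ hy, hcounty]
    have hrest : ∑ z ∈ R.erase y, ((A.filter (fun h => f h z = α)).card : ℝ)
        = ((R.card : ℝ) - 1) * ((A.card : ℝ) * ((2:ℝ)^m)⁻¹) := by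
      rw [Finset.sum_congr rfl (fun z hz => hcountz z (Finset.mem_of_mem_erase hz)
        (Finset.ne_of_mem_erase hz))]
      rw [Finset.sum_const, Finset.card_erase_of_mem hy, nsmul_eq_mul]
      rw [Nat.cast_sub hR1]; push_cast; ring
    rw [hrest]
    have hbt : ((2:ℝ)^m)⁻¹ * (R.card : ℝ) ≤ t := by linarith
    nlinarith [hApos.le, mul_le_mul_of_nonneg_left hbt hApos.le, h2m]
  -- Markov
  set B : Finset H := A.filter (fun h => ¬ ((R.filter (fun z => f h z = α)).card : ℝ) ≤ 2 * t)
    with hB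
  have hMarkov : (B.card : ℝ) * (2 * t) ≤ ∑ h ∈ A, ((R.filter (fun z => f h z = α)).card : ℝ) := by
    calc (B.card : ℝ) * (2 * t) = ∑ _h ∈ B, (2 * t) := by
          rw [Finset.sum_const, nsmul_eq_mul]
      _ ≤ ∑ h ∈ B, ((R.filter (fun z => f h z = α)).card : ℝ) := by
          apply Finset.sum_le_sum
          intro h hh
          rw [hB, Finset.mem_filter] at hh
          exact (not_le.1 hh.2).le
      _ ≤ ∑ h ∈ A, ((R.filter (fun z => f h z = α)).card : ℝ) := by
          apply Finset.sum_le_sum_of_subset_of_nonneg (Finset.filter_subset _ _)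
          intro h _ _; positivity
  -- identify goal set
  have hGset : Finset.univ.filter (fun h : H =>
        ((R.filter (fun z => f h z = α)).card : ℝ) ≤ 2 * (n : ℝ) ^ ((1 : ℝ) / k)
          ∧ f h y = α)
      = A.filter (fun h => ((R.filter (fun z => f h z = α)).card : ℝ) ≤ 2 * t) := by
    rw [hA, Finset.filter_filter]
    apply Finset.filter_congr
    intro h _
    rw [← ht]
    constructor
    · rintro ⟨a, b⟩; exact ⟨b, a⟩
    · rintro ⟨a, b⟩; exact ⟨b, a⟩
  have hsplit : ((A.filter (fun h => ((R.filter (fun z => f h z = α)).card : ℝ) ≤ 2 * t)).card : ℝ)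
      + (B.card : ℝ) = (A.card : ℝ) := by
    rw [hB]
    exact_mod_cast congrArg (Nat.cast (R := ℝ))
      (Finset.card_filter_add_card_filter_not
        (p := fun h => ((R.filter (fun z => f h z = α)).card : ℝ) ≤ 2 * t))
  rw [hGset]
  rw [hneg, div_le_div_iff₀ (by norm_num) hApos]
  have htinv : t⁻¹ * t = 1 := inv_mul_cancel₀ ht0.ne'
  have hBbound : (B.card : ℝ) * (2 * t) ≤ (A.card : ℝ) * (1 + t) := le_trans hMarkov hsum
  nlinarith [hsplit, hBbound, htinv, hApos, ht0, hn1, (by positivity : (0:ℝ) ≤ (B.card : ℝ))]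
end

section
/- Let H be a pairwise independent family of hash functions from {0,1}^n to {0,1}^m and let R ⊆ {0,1}^n. For h uniform in H and α uniform in {0,1}^m chosen independently, and for any fixed y ∈ R, the probability that both h(y) = α and |R ∩ h⁻¹(α)| ≤ t is at least 2^{-m}·(1 − (2^{-m}(|R|−1)+1)/t) for any real t > 0. -/
open Finset

open scoped Classical in
/-- For a pairwise independent hash family `H` from `{0,1}^n` to `{0,1}^m`,
`R ⊆ {0,1}^n`, `y ∈ R`, and independently uniform `h ∈ H`, `α ∈ {0,1}^m`, the
probability that both `h(y) = α` and `|R ∩ h⁻¹(α)| ≤ t` is at least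
`2^{-m}·(1 - (2^{-m}(|R|-1)+1)/t)` for any real `t > 0`. -/
theorem joint_cell_prob (n m : ℕ) (H : Type) [Fintype H] [Nonempty H]
    (f : H → (Fin n → Bool) → (Fin m → Bool))
    (hpair : ∀ z z' : Fin n → Bool, z ≠ z' → ∀ β β' : Fin m → Bool,
      ((Finset.univ.filter (fun h : H => f h z = β ∧ f h z' = β')).card : ℝ)
        / (Fintype.card H : ℝ) = ((2 : ℝ) ^ (2 * m))⁻¹)
    (hone : ∀ (z : Fin n → Bool) (β : Fin m → Bool),
      ((Finset.univ.filter (fun h : H => f h z = β)).card : ℝ)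
        / (Fintype.card H : ℝ) = ((2 : ℝ) ^ m)⁻¹)
    (R : Finset (Fin n → Bool)) (y : Fin n → Bool) (hy : y ∈ R)
    (t : ℝ) (ht : 0 < t) :
    ((2 : ℝ) ^ m)⁻¹ * (1 - (((2 : ℝ) ^ m)⁻¹ * ((R.card : ℝ) - 1) + 1) / t) ≤
      ((Finset.univ.filter (fun p : H × (Fin m → Bool) =>
          f p.1 y = p.2 ∧ ((R.filter (fun z => f p.1 z = p.2)).card : ℝ) ≤ t)).card : ℝ)
        / (Fintype.card (H × (Fin m → Bool)) : ℝ) := by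
  classical
  have hNpos : 0 < (Fintype.card H : ℝ) := by
    exact_mod_cast Fintype.card_pos
  set N : ℝ := (Fintype.card H : ℝ) with hNdef
  have h2m : (0:ℝ) < (2:ℝ) ^ m := by positivity
  set E : ℝ := ((2 : ℝ) ^ m)⁻¹ * ((R.card : ℝ) - 1) + 1 with hEdef
  set cell : H → ℕ := fun h => (R.filter (fun z => f h z = f h y)).card with hcell
  -- total sum equals N * E
  have hsum : ∑ h : H, (cell h : ℝ) = N * E := by
    have step1 : ∑ h : H, (cell h : ℝ)
        = ∑ z ∈ R, ((Finset.univ.filter (fun h : H => f h z = f h y)).card : ℝ) := by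
      simp only [hcell, Finset.card_filter]
      push_cast
      rw [Finset.sum_comm]
    rw [step1]
    have hRerase : ∑ z ∈ R, ((Finset.univ.filter (fun h : H => f h z = f h y)).card : ℝ)
        = ((Finset.univ.filter (fun h : H => f h y = f h y)).card : ℝ)
          + ∑ z ∈ R.erase y, ((Finset.univ.filter (fun h : H => f h z = f h y)).card : ℝ) := by
      rw [← Finset.add_sum_erase _ _ hy]
    rw [hRerase]
    have hyterm : ((Finset.univ.filter (fun h : H => f h y = f h y)).card : ℝ) = N := by
      simp [hNdef]
    have hz : ∀ z ∈ R.erase y,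
        ((Finset.univ.filter (fun h : H => f h z = f h y)).card : ℝ) = N * ((2:ℝ)^m)⁻¹ := by
      intro z hz
      have hzy : z ≠ y := Finset.ne_of_mem_erase hz
      have split : ((Finset.univ.filter (fun h : H => f h z = f h y)).card : ℝ)
          = ∑ β : Fin m → Bool,
            ((Finset.univ.filter (fun h : H => f h z = β ∧ f h y = β)).card : ℝ) := by
        simp only [Finset.card_filter]
        push_cast
        rw [Finset.sum_comm]
        apply Finset.sum_congr rfl
        intro h _
        by_cases hc : f h z = f h y
        · rw [Finset.sum_eq_single (f h y)]
          · simp [hc]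
          · intro β _ hβ
            simp only [ite_eq_right_iff]
            rintro ⟨h1, h2⟩; exact absurd h2.symm hβ
          · simp
        · rw [if_neg hc]
          symm
          apply Finset.sum_eq_zero
          intro β _
          simp only [ite_eq_right_iff]
          rintro ⟨h1, h2⟩; exact absurd (h1.trans h2.symm) hc
      rw [split]
      have hval : ∀ β : Fin m → Bool,
          ((Finset.univ.filter (fun h : H => f h z = β ∧ f h y = β)).card : ℝ)
            = N * ((2:ℝ)^(2*m))⁻¹ := by
        intro β
        have := hpair z y hzy β β
        field_simp at this ⊢
        linarith [this]
      rw [Finset.sum_congr rfl (fun β _ => hval β)]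
      simp only [Finset.sum_const, Finset.card_univ, nsmul_eq_mul]
      have hcardfun : (Fintype.card (Fin m → Bool) : ℝ) = (2:ℝ)^m := by
        simp [Fintype.card_fun]
      rw [hcardfun]
      rw [two_mul, pow_add]
      field_simp
    rw [Finset.sum_congr rfl hz, hyterm]
    simp only [Finset.sum_const, nsmul_eq_mul]
    have hcarderase : ((R.erase y).card : ℝ) = (R.card : ℝ) - 1 := by
      rw [Finset.card_erase_of_mem hy]
      have h1 : 1 ≤ R.card := Finset.card_pos.mpr ⟨y, hy⟩
      push_cast [Nat.cast_sub h1]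
      ring
    rw [hcarderase, hEdef]
    ring
  -- Markov: bad set bound
  set Bad : Finset H := Finset.univ.filter (fun h => t < (cell h : ℝ)) with hBad
  have hBadBound : (Bad.card : ℝ) * t ≤ N * E := by
    have h1 : (Bad.card : ℝ) * t ≤ ∑ h ∈ Bad, (cell h : ℝ) := by
      rw [mul_comm]
      calc t * (Bad.card : ℝ) = ∑ _h ∈ Bad, t := by simp [mul_comm]
        _ ≤ ∑ h ∈ Bad, (cell h : ℝ) := by
            apply Finset.sum_le_sum
            intro h hh
            exact le_of_lt (Finset.mem_filter.mp hh).2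
    have h2 : ∑ h ∈ Bad, (cell h : ℝ) ≤ ∑ h : H, (cell h : ℝ) := by
      apply Finset.sum_le_sum_of_subset_of_nonneg (Finset.subset_univ _)
      intro h _ _; positivity
    linarith [hsum ▸ h2, h1]
  -- Good set
  set Good : Finset H := Finset.univ.filter (fun h => (cell h : ℝ) ≤ t) with hGood
  have hGoodCard : (Good.card : ℝ) = N - (Bad.card : ℝ) := by
    have := Finset.card_filter_add_card_filter_not
      (s := (Finset.univ : Finset H)) (p := fun h => (cell h : ℝ) ≤ t)
    simp only [not_le] at this
    have : Good.card + Bad.card = Fintype.card H := by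
      simpa [hGood, hBad, Finset.card_univ] using this
    have := congrArg (fun k : ℕ => (k : ℝ)) this
    push_cast at this
    linarith
  -- identify the pair set with Good via image
  have hPair : (Finset.univ.filter (fun p : H × (Fin m → Bool) =>
      f p.1 y = p.2 ∧ ((R.filter (fun z => f p.1 z = p.2)).card : ℝ) ≤ t))
      = Good.image (fun h => (h, f h y)) := by
    ext ⟨h, β⟩
    simp only [Finset.mem_filter, Finset.mem_univ, true_and, Finset.mem_image,
      hGood, Prod.mk.injEq]
    constructor
    · rintro ⟨h1, h2⟩
      exact ⟨h, ⟨by simp [hcell, ← h1] at h2 ⊢; exact h2, rfl, h1⟩⟩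
    · rintro ⟨h', ⟨hc, rfl, rfl⟩⟩
      exact ⟨rfl, by simpa [hcell] using hc⟩
  have hPairCard : ((Finset.univ.filter (fun p : H × (Fin m → Bool) =>
      f p.1 y = p.2 ∧ ((R.filter (fun z => f p.1 z = p.2)).card : ℝ) ≤ t)).card : ℝ)
      = (Good.card : ℝ) := by
    rw [hPair]
    congr 1
    rw [Finset.card_image_of_injective]
    intro a b hab
    exact (Prod.mk.injEq _ _ _ _).mp hab |>.1
  rw [hPairCard, hGoodCard]
  have hDenom : (Fintype.card (H × (Fin m → Bool)) : ℝ) = N * (2:ℝ)^m := by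
    simp [Fintype.card_prod, Fintype.card_fun, hNdef]
  rw [hDenom]
  rw [le_div_iff₀ (by positivity)]
  have hBadLe : (Bad.card : ℝ) ≤ N * E / t := by
    rw [le_div_iff₀ ht]; linarith
  have hkey : ((2:ℝ)^m)⁻¹ * (1 - E / t) * (N * (2:ℝ)^m) = N - N * E / t := by
    field_simp
  rw [hkey]
  linarith
end
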